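/- For every positive integer n, the domination polynomial of the friendship graph F_n is D(F_n,x) = (2x+x^2)^n + x·(1+x)^{2n}. -/
import Mathlib


open Polynomial

/-- `S` is a dominating set of the graph `G`: every vertex not in `S` has a neighbor in `S`. -/
def SimpleGraph.IsDomSet {V : Type*} (G : SimpleGraph V) (S : Finset V) : Prop :=
  ∀ v : V, v ∈ S ∨ ∃ u ∈ S, G.Adj u v

open Classical in
/-- The domination polynomial of a finite graph `G`:
`D(G,x) = ∑ d(G,i) xⁱ` where `d(G,i)` is the number of dominating sets of size `i`. -/
noncomputable def domPoly {V : Type*} [Fintype V] (G : SimpleGraph V) : Polynomial ℂ :=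
  ∑ S ∈ Finset.univ.filter (fun S : Finset V => G.IsDomSet S), X ^ S.card

/-- The friendship graph `F_n`: the join of `K₁` (the vertex `none`) with `n`
disjoint copies of `K₂`, i.e. `n` triangles sharing exactly one common vertex. -/
def friendshipGraph (n : ℕ) : SimpleGraph (Option (Fin n × Fin 2)) :=
  SimpleGraph.fromRel (fun a b =>
    (a = none ∧ b ≠ none) ∨ (∃ i, a = some (i, 0) ∧ b = some (i, 1)))

/-! ### Auxiliary lemmas -/

section Aux

set_option linter.unusedSectionVars false

lemma friendship_adj_none (n : ℕ) (p : Fin n × Fin 2) :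
    (friendshipGraph n).Adj (some p) none := by
  simp [friendshipGraph, SimpleGraph.fromRel_adj]

lemma friendship_adj_pair (n : ℕ) (i : Fin n) :
    (friendshipGraph n).Adj (some (i, 0)) (some (i, 1)) := by
  simp [friendshipGraph, SimpleGraph.fromRel_adj]

lemma friendship_dom_of_none (n : ℕ) (S : Finset (Option (Fin n × Fin 2))) (h : none ∈ S) :
    (friendshipGraph n).IsDomSet S := by
  intro v
  match v with
  | none => exact Or.inl h
  | some p => exact Or.inr ⟨none, h, ((friendship_adj_none n p).symm)⟩

lemma friendship_dom_iff (n : ℕ) (hn : 1 ≤ n) (S : Finset (Option (Fin n × Fin 2)))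
    (h : none ∉ S) :
    (friendshipGraph n).IsDomSet S ↔ ∀ i : Fin n, some (i, 0) ∈ S ∨ some (i, 1) ∈ S := by
  constructor
  · intro hd i
    rcases hd (some (i, 0)) with h0 | ⟨u, hu, hadj⟩
    · exact Or.inl h0
    · rw [friendshipGraph, SimpleGraph.fromRel_adj] at hadj
      rcases hadj with ⟨hne, hrel | hrel⟩
      · rcases hrel with ⟨hu0, -⟩ | ⟨i', hi1, hi2⟩
        · exact absurd (hu0 ▸ hu) h
        · simp at hi2
      · rcases hrel with ⟨h1, -⟩ | ⟨i', hi1, hi2⟩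
        · simp at h1
        · simp only [Option.some_inj, Prod.mk.injEq] at hi1
          right; rw [hi2] at hu; rwa [← hi1.1] at hu
  · intro hall v
    match v with
    | none =>
      rcases hall ⟨0, hn⟩ with h0 | h1
      · exact Or.inr ⟨_, h0, friendship_adj_none n _⟩
      · exact Or.inr ⟨_, h1, friendship_adj_none n _⟩
    | some (i, j) =>
      by_cases hv : some (i, j) ∈ S
      · exact Or.inl hv
      · rcases hall i with h0 | h1
        · match j, hv with
          | 0, hv => exact absurd h0 hv
          | 1, hv => exact Or.inr ⟨_, h0, friendship_adj_pair n i⟩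
        · match j, hv with
          | 0, hv => exact Or.inr ⟨_, h1, (friendship_adj_pair n i).symm⟩
          | 1, hv => exact absurd h1 hv

lemma sum_pow_card_powerset {α : Type*} [DecidableEq α] (s : Finset α) :
    ∑ T ∈ s.powerset, (X : ℂ[X]) ^ T.card = (1 + X) ^ s.card := by
  have h := Finset.prod_add (fun _ : α => (X : ℂ[X])) (fun _ => 1) s
  simp only [Finset.prod_const, one_pow, mul_one] at h
  rw [add_comm]
  rw [h]

variable {β : Type*} [DecidableEq β] [Fintype β]

private def ι (T : Finset β) : Finset (Option β) :=
  T.map ⟨some, Option.some_injective β⟩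

private noncomputable def ρ (S : Finset (Option β)) : Finset β :=
  S.preimage some (Set.injOn_of_injective (Option.some_injective β))

@[simp] private lemma mem_ι {T : Finset β} {b : β} : some b ∈ ι T ↔ b ∈ T := by
  simp [ι]

@[simp] private lemma none_notMem_ι {T : Finset β} : none ∉ ι T := by
  simp [ι]

@[simp] private lemma mem_ρ {S : Finset (Option β)} {b : β} : b ∈ ρ S ↔ some b ∈ S := by
  simp [ρ]

private lemma card_ρ {S : Finset (Option β)} (h : none ∈ S) : S.card = (ρ S).card + 1 := by
  have hins : insert none (ι (ρ S)) = S := by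
    ext a
    match a with
    | none => simp [h]
    | some b => simp
  have : (ι (ρ S)).card = (ρ S).card := Finset.card_map _
  conv_lhs => rw [← hins]
  rw [Finset.card_insert_of_notMem none_notMem_ι, this]

open Classical in
lemma friendship_sumA (n : ℕ) :
    ∑ S ∈ Finset.univ.filter (fun S : Finset (Option (Fin n × Fin 2)) => none ∈ S),
      (X : ℂ[X]) ^ S.card = X * (1 + X) ^ (2 * n) := by
  refine (Finset.sum_nbij'
    (t := (Finset.univ : Finset (Finset (Fin n × Fin 2))))
    (g := fun T : Finset (Fin n × Fin 2) => (X : ℂ[X]) * X ^ T.card)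
    (fun S => ρ S) (fun T => insert none (ι T))
    (fun S _ => Finset.mem_univ _)
    (fun T _ => by simp)
    ?_ ?_ ?_).trans ?_
  · intro S hS
    have h : none ∈ S := (Finset.mem_filter.mp hS).2
    ext a
    match a with
    | none => simp [h]
    | some b => simp
  · intro T _
    ext b
    simp
  · intro S hS
    rw [card_ρ (Finset.mem_filter.mp hS).2, pow_succ, mul_comm]
  · rw [← Finset.mul_sum, ← Finset.powerset_univ, sum_pow_card_powerset]
    congr 2
    simp [Finset.card_univ]; ring

lemma card_prod_filter {α γ : Type*} [Fintype α] [Fintype γ] [DecidableEq α] [DecidableEq γ]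
    (R : Finset (α × γ)) :
    R.card = ∑ a : α, (Finset.univ.filter (fun c => (a, c) ∈ R)).card := by
  have h1 : R = Finset.univ.filter (· ∈ R) := by simp
  conv_lhs => rw [h1]
  rw [Finset.card_filter, Fintype.sum_prod_type]
  exact Finset.sum_congr rfl fun a _ => (Finset.card_filter _ _).symm

lemma sumFin2 :
    ∑ s ∈ Finset.univ.filter (fun s : Finset (Fin 2) => s.Nonempty),
      (X : ℂ[X]) ^ s.card = 2 * X + X ^ 2 := by
  have he : Finset.univ.filter (fun s : Finset (Fin 2) => s.Nonempty)
      = Finset.univ.erase ∅ := by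
    ext s; simp [Finset.nonempty_iff_ne_empty]
  rw [he]
  have h := Finset.add_sum_erase Finset.univ (fun s : Finset (Fin 2) => (X : ℂ[X]) ^ s.card)
    (Finset.mem_univ ∅)
  have h2 : ∑ s : Finset (Fin 2), (X : ℂ[X]) ^ s.card = (1 + X) ^ 2 := by
    have := Finset.prod_add (fun _ : Fin 2 => (X : ℂ[X])) (fun _ => 1) Finset.univ
    simp only [Finset.prod_const, one_pow, mul_one] at this
    rw [← Finset.powerset_univ]
    rw [add_comm, ← this]
    simp
  rw [h2] at h
  simp only [Finset.card_empty, pow_zero] at h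
  linear_combination h

open Classical in
lemma friendship_sumB (n : ℕ) :
    ∑ S ∈ Finset.univ.filter (fun S : Finset (Option (Fin n × Fin 2)) =>
        none ∉ S ∧ ∀ i : Fin n, some (i, 0) ∈ S ∨ some (i, 1) ∈ S),
      (X : ℂ[X]) ^ S.card = (2 * X + X ^ 2) ^ n := by
  refine (Finset.sum_nbij'
    (t := Fintype.piFinset (fun _ : Fin n =>
      Finset.univ.filter (fun s : Finset (Fin 2) => s.Nonempty)))
    (g := fun f : Fin n → Finset (Fin 2) => ∏ i, (X : ℂ[X]) ^ (f i).card)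
    (fun S => fun i => Finset.univ.filter (fun j => some (i, j) ∈ S))
    (fun f => (Finset.univ.filter (fun p : Fin n × Fin 2 => p.2 ∈ f p.1)).map
      ⟨some, Option.some_injective _⟩)
    ?_ ?_ ?_ ?_ ?_).trans ?_
  · intro S hS
    rw [Fintype.mem_piFinset]
    intro i
    rcases (Finset.mem_filter.mp hS).2.2 i with h0 | h1
    · exact Finset.mem_filter.mpr ⟨Finset.mem_univ _, ⟨0, by simp [h0]⟩⟩
    · exact Finset.mem_filter.mpr ⟨Finset.mem_univ _, ⟨1, by simp [h1]⟩⟩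
  · intro f hf
    rw [Fintype.mem_piFinset] at hf
    refine Finset.mem_filter.mpr ⟨Finset.mem_univ _, ?_, ?_⟩
    · simp
    · intro i
      obtain ⟨j, hj⟩ := Finset.mem_filter.mp (hf i) |>.2
      match j, hj with
      | 0, hj => left; simp [hj]
      | 1, hj => right; simp [hj]
  · intro S hS
    have hnone : none ∉ S := (Finset.mem_filter.mp hS).2.1
    ext a
    match a with
    | none => simp [hnone]
    | some (i, j) => simp
  · intro f _
    funext i
    ext j
    simp
  · intro S hS
    have hnone : none ∉ S := (Finset.mem_filter.mp hS).2.1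
    show (X : ℂ[X]) ^ S.card =
      ∏ i, (X : ℂ[X]) ^ (Finset.univ.filter (fun j => some (i, j) ∈ S)).card
    rw [Finset.prod_pow_eq_pow_sum]
    congr 1
    have hcard : S.card = (S.preimage some
        (Set.injOn_of_injective (Option.some_injective _))).card := by
      have : S = (S.preimage some
          (Set.injOn_of_injective (Option.some_injective _))).map
          ⟨some, Option.some_injective _⟩ := by
        ext a
        match a with
        | none => simp [hnone]
        | some b => simp
      conv_lhs => rw [this]
      exact Finset.card_map _
    rw [hcard, card_prod_filter]
    congr 1
    funext i
    congr 1
    ext j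
    simp
  · have hps := Finset.prod_univ_sum
      (t := fun _ : Fin n => Finset.univ.filter (fun s : Finset (Fin 2) => s.Nonempty))
      (f := fun _ s => (X : ℂ[X]) ^ s.card)
    rw [← hps, Finset.prod_congr rfl (fun i _ => sumFin2)]
    simp

end Aux

/-- For every `n ≥ 1`, `D(F_n,x) = (2x+x²)ⁿ + x(1+x)^{2n}`. -/
theorem domPoly_friendship (n : ℕ) (hn : 1 ≤ n) :
    domPoly (friendshipGraph n) = (2 * X + X ^ 2) ^ n + X * (1 + X) ^ (2 * n) := by
  classical
  rw [domPoly]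
  rw [← Finset.sum_filter_add_sum_filter_not
    (Finset.univ.filter (fun S : Finset (Option (Fin n × Fin 2)) =>
      (friendshipGraph n).IsDomSet S)) (fun S => none ∈ S)]
  have h1 : (Finset.univ.filter (fun S : Finset (Option (Fin n × Fin 2)) =>
      (friendshipGraph n).IsDomSet S)).filter (fun S => none ∈ S)
      = Finset.univ.filter (fun S : Finset (Option (Fin n × Fin 2)) => none ∈ S) := by
    ext S
    simp only [Finset.mem_filter, Finset.mem_univ, true_and]
    exact ⟨fun h => h.2, fun h => ⟨friendship_dom_of_none n S h, h⟩⟩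
  have h2 : (Finset.univ.filter (fun S : Finset (Option (Fin n × Fin 2)) =>
      (friendshipGraph n).IsDomSet S)).filter (fun S => ¬ none ∈ S)
      = Finset.univ.filter (fun S : Finset (Option (Fin n × Fin 2)) =>
        none ∉ S ∧ ∀ i : Fin n, some (i, 0) ∈ S ∨ some (i, 1) ∈ S) := by
    ext S
    simp only [Finset.mem_filter, Finset.mem_univ, true_and]
    constructor
    · rintro ⟨hd, hne⟩
      exact ⟨hne, (friendship_dom_iff n hn S hne).mp hd⟩
    · rintro ⟨hne, hall⟩
      exact ⟨(friendship_dom_iff n hn S hne).mpr hall, hne⟩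
  rw [h1, h2, friendship_sumA, friendship_sumB]
  ring
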